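/- arXiv:2307.12832 — 4 statements merged into one kernel-verified Lean document; each statement's English description precedes it below -/
import Mathlib

section
/- Let G be a finite group acting on R^n by measurable bijections, let T : R^n → R be a test statistic, and suppose X is G-invariant in distribution. Then the test that rejects when T(X) > q, where q is the (1−α)-quantile of the empirical distribution {T(gX) : g ∈ G}, has rejection probability at most α. -/
open MeasureTheory ENNReal

/-- A group invariance test based on the α upper-quantile of the reference distribution
`{T(g x) : g ∈ G}` has rejection probability at most `α`. -/
theorem group_invariance_test_level
    {Ω : Type*} [MeasurableSpace Ω] (P : Measure Ω) [IsProbabilityMeasure P]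
    {n : ℕ} {G : Type*} [Group G] [Fintype G]
    (f : G →* Function.End (Fin n → ℝ))
    (hmeas : ∀ g : G, Measurable (f g))
    (X : Ω → (Fin n → ℝ)) (hX : Measurable X)
    (T : (Fin n → ℝ) → ℝ) (hT : Measurable T)
    (hinv : ∀ g : G, Measure.map (fun ω => f g (X ω)) P = Measure.map X P)
    (α : ℝ) (hα : 0 ≤ α)
    -- `q x` is the smallest value `t` among the reference values `T (g x)` such that
    -- at most `α * |G|` of the reference values strictly exceed `t`.
    (q : (Fin n → ℝ) → ℝ)
    (hq : ∀ x, q x = sInf {t : ℝ | (t ∈ Set.range fun g : G => T (f g x)) ∧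
      ((Finset.univ.filter (fun g : G => t < T (f g x))).card : ℝ) ≤ α * Fintype.card G}) :
    P {ω | q (X ω) < T (X ω)} ≤ ENNReal.ofReal α := by
  classical
  set N := Fintype.card G with hNdef
  set S : (Fin n → ℝ) → Set ℝ := fun x => {t : ℝ | (t ∈ Set.range fun g : G => T (f g x)) ∧
      ((Finset.univ.filter (fun g : G => t < T (f g x))).card : ℝ) ≤ α * N} with hSdef
  -- action compatibility
  have hact : ∀ (g h : G) (x : Fin n → ℝ), f g (f h x) = f (g * h) x := by
    intro g h x
    rw [map_mul]
    rfl
  -- S is finite and nonempty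
  have hSfin : ∀ x, (S x).Finite := fun x =>
    (Set.finite_range fun g : G => T (f g x)).subset fun t ht => ht.1
  have hSne : ∀ x, (S x).Nonempty := by
    intro x
    obtain ⟨g₀, hg₀⟩ := Finset.exists_max_image Finset.univ (fun g : G => T (f g x))
      ⟨1, Finset.mem_univ 1⟩
    refine ⟨T (f g₀ x), ⟨g₀, rfl⟩, ?_⟩
    have : (Finset.univ.filter (fun g : G => T (f g₀ x) < T (f g x))) = ∅ := by
      apply Finset.filter_eq_empty_iff.2
      intro g _
      exact not_lt.2 (hg₀.2 g (Finset.mem_univ g))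
    rw [this]
    simp only [Finset.card_empty, Nat.cast_zero]
    positivity
  have hqmem : ∀ x, q x ∈ S x := by
    intro x
    rw [hq x]
    exact (hSne x).csInf_mem (hSfin x)
  -- invariance of S and q
  have hSinv : ∀ (g₀ : G) (x : Fin n → ℝ), S (f g₀ x) = S x := by
    intro g₀ x
    ext t
    have hr : (Set.range fun g : G => T (f g (f g₀ x))) = Set.range fun g : G => T (f g x) := by
      have : (fun g : G => T (f g (f g₀ x))) = (fun g : G => T (f g x)) ∘ (fun g => g * g₀) := by
        funext g; simp [hact]
      rw [this]
      exact (Equiv.mulRight g₀).surjective.range_comp _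
    have hc : (Finset.univ.filter (fun g : G => t < T (f g (f g₀ x)))).card
        = (Finset.univ.filter (fun g : G => t < T (f g x))).card := by
      apply Finset.card_equiv (Equiv.mulRight g₀)
      intro g
      simp only [Finset.mem_filter, Finset.mem_univ, true_and, Equiv.coe_mulRight]
      rw [hact]
    simp only [hSdef, Set.mem_setOf_eq, hr, hc]
  have hqinv : ∀ (g₀ : G) (x : Fin n → ℝ), q (f g₀ x) = q x := by
    intro g₀ x
    rw [hq, hq]
    exact congrArg sInf (hSinv g₀ x)
  -- the rejection region in sample space
  set A : Set (Fin n → ℝ) := {x | q x < T x} with hAdef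
  have hAeq : A = ⋃ g : G, {x | T (f g x) < T x ∧
      ((Finset.univ.filter (fun h : G => T (f g x) < T (f h x))).card : ℝ) ≤ α * N} := by
    ext x
    simp only [hAdef, Set.mem_setOf_eq, Set.mem_iUnion]
    constructor
    · intro hx
      obtain ⟨⟨g, hg⟩, hcard⟩ := hqmem x
      have hg' : T (f g x) = q x := hg
      exact ⟨g, by rw [hg']; exact hx, by rw [hg']; exact hcard⟩
    · rintro ⟨g, h1, h2⟩
      have : q x ≤ T (f g x) := by
        rw [hq x]
        exact csInf_le (hSfin x).bddBelow ⟨⟨g, rfl⟩, h2⟩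
      exact lt_of_le_of_lt this h1
  have hAmeas : MeasurableSet A := by
    rw [hAeq]
    apply MeasurableSet.iUnion
    intro g
    apply MeasurableSet.inter
    · exact measurableSet_lt (hT.comp (hmeas g)) hT
    · have hm : Measurable (fun x =>
          ((Finset.univ.filter (fun h : G => T (f g x) < T (f h x))).card : ℝ)) := by
        have : (fun x => ((Finset.univ.filter (fun h : G => T (f g x) < T (f h x))).card : ℝ))
            = fun x => ∑ h : G, if T (f g x) < T (f h x) then (1 : ℝ) else 0 := by
          funext x
          rw [Finset.card_filter]
          push_cast
          rfl
        rw [this]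
        apply Finset.measurable_sum
        intro h _
        exact Measurable.ite (measurableSet_lt (hT.comp (hmeas g)) (hT.comp (hmeas h)))
          measurable_const measurable_const
      exact measurableSet_le hm measurable_const
  -- each shifted event has the same probability
  set B : G → Set Ω := fun g => {ω | q (X ω) < T (f g (X ω))} with hBdef
  have hBeq : ∀ g : G, B g = (fun ω => f g (X ω)) ⁻¹' A := by
    intro g
    ext ω
    simp [hBdef, hAdef, hqinv g (X ω)]
  have hBmeas : ∀ g : G, MeasurableSet (B g) := by
    intro g
    rw [hBeq g]
    exact ((hmeas g).comp hX) hAmeas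
  have key : ∀ g : G, P (B g) = P (X ⁻¹' A) := by
    intro g
    have hm : Measurable fun ω => f g (X ω) := (hmeas g).comp hX
    rw [hBeq g, ← Measure.map_apply hm hAmeas, hinv g, Measure.map_apply hX hAmeas]
  -- sum of the probabilities
  have hsum1 : ∑ g : G, P (B g) = (N : ℝ≥0∞) * P (X ⁻¹' A) := by
    simp [key, Finset.card_univ, hNdef, mul_comm]
  have hsum2 : ∑ g : G, P (B g)
      = ∫⁻ ω, ((Finset.univ.filter (fun g : G => q (X ω) < T (f g (X ω)))).card : ℝ≥0∞) ∂P := by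
    have h1 : ∀ g : G, P (B g) = ∫⁻ ω, (B g).indicator 1 ω ∂P := by
      intro g
      rw [lintegral_indicator_one (hBmeas g)]
    rw [Finset.sum_congr rfl fun g _ => h1 g, ← lintegral_finset_sum _ (fun g _ =>
      (measurable_one.indicator (hBmeas g)))]
    congr 1
    funext ω
    rw [Finset.card_filter]
    push_cast
    rw [Finset.sum_congr rfl]
    intro g _
    by_cases hg : ω ∈ B g
    · simp [Set.indicator_of_mem hg, hBdef, hg.out]
    · simp only [hBdef, Set.mem_setOf_eq] at hg
      simp [Set.indicator_of_notMem, hg, hBdef]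
  -- pointwise bound on the count
  have hbound : ∀ ω, ((Finset.univ.filter (fun g : G => q (X ω) < T (f g (X ω)))).card : ℝ≥0∞)
      ≤ ENNReal.ofReal (α * N) := by
    intro ω
    have := (hqmem (X ω)).2
    calc ((Finset.univ.filter (fun g : G => q (X ω) < T (f g (X ω)))).card : ℝ≥0∞)
        = ENNReal.ofReal ((Finset.univ.filter (fun g : G => q (X ω) < T (f g (X ω)))).card : ℝ) := by
          rw [ENNReal.ofReal_natCast]
      _ ≤ ENNReal.ofReal (α * N) := ENNReal.ofReal_le_ofReal this
  have hfinal : (N : ℝ≥0∞) * P (X ⁻¹' A) ≤ ENNReal.ofReal α * N := by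
    rw [← hsum1, hsum2]
    calc ∫⁻ ω, ((Finset.univ.filter (fun g : G => q (X ω) < T (f g (X ω)))).card : ℝ≥0∞) ∂P
        ≤ ∫⁻ _, ENNReal.ofReal (α * N) ∂P := lintegral_mono fun ω => hbound ω
      _ = ENNReal.ofReal (α * N) := by simp
      _ = ENNReal.ofReal α * N := by
          rw [ENNReal.ofReal_mul hα, ENNReal.ofReal_natCast]
  have hN0 : (N : ℝ≥0∞) ≠ 0 := by
    simp [hNdef, Fintype.card_ne_zero]
  have hNtop : (N : ℝ≥0∞) ≠ ⊤ := ENNReal.natCast_ne_top N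
  have : P (X ⁻¹' A) ≤ ENNReal.ofReal α := by
    rw [mul_comm (ENNReal.ofReal α) (N : ℝ≥0∞)] at hfinal
    exact (ENNReal.mul_le_mul_iff_right hN0 hNtop).1 hfinal
  exact this
end

section
/- For a finite group G of order m acting on R^n and a test statistic T, if X is G-invariant in distribution and the values T(gX) for g ∈ G are almost surely distinct, then the probability that T(X) exceeds all but at most ⌊αm⌋−1 of the values {T(gX) : g ∈ G} is exactly ⌊αm⌋/m. -/
/-!
Write `r_g(x)` for the rank from the top of `T(g x)` among the values `T(h x)`, `h ∈ G`.
Reindexing `h ↦ h g` shows `r_1(g x) = r_g(x)`, so by invariance every event `{r_g(X) ≤ k}` has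
the probability of `{r_1(X) ≤ k}`. When the values are distinct the ranks are a permutation of
`1, …, m`, so exactly `k` of these `m` events occur; taking expectations, `m P(r_1(X) ≤ k) = k`.
-/

open MeasureTheory Finset

section TopRank

variable {ι β : Type*} [Fintype ι] [LinearOrder β]

def topRank (v : ι → β) (i : ι) : ℕ := #{j | v i ≤ v j}

lemma topRank_lt_topRank {v : ι → β} {i j : ι} (h : v i < v j) : topRank v j < topRank v i :=
  card_lt_card <| (ssubset_iff_of_subset fun l hl => by
    simp only [mem_filter, mem_univ, true_and] at hl ⊢; exact h.le.trans hl).2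
    ⟨i, by simp, by simpa using h⟩

lemma topRank_injective {v : ι → β} (hv : Function.Injective v) :
    Function.Injective (topRank v) := by
  intro i j hij
  by_contra hne
  rcases (hv.ne hne).lt_or_gt with h | h
  · exact (topRank_lt_topRank h).ne hij.symm
  · exact (topRank_lt_topRank h).ne hij

lemma topRank_mem_Icc (v : ι → β) (i : ι) : topRank v i ∈ Icc 1 (Fintype.card ι) :=
  mem_Icc.2 ⟨card_pos.2 ⟨i, by simp⟩, card_le_univ _⟩

lemma image_topRank [DecidableEq ι] {v : ι → β} (hv : Function.Injective v) :
    univ.image (topRank v) = Icc 1 (Fintype.card ι) :=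
  eq_of_subset_of_card_le (fun _ hr => by
      obtain ⟨i, -, rfl⟩ := mem_image.1 hr; exact topRank_mem_Icc v i)
    (by simp [card_image_of_injective _ (topRank_injective hv)])

lemma card_topRank_le {v : ι → β} (hv : Function.Injective v) {k : ℕ}
    (hk : k ≤ Fintype.card ι) : #{i | topRank v i ≤ k} = k := by
  classical
  calc #{i | topRank v i ≤ k}
      = #((univ.image (topRank v)).filter (· ≤ k)) := by
        rw [filter_image, card_image_of_injective _ (topRank_injective hv)]
    _ = #(Icc 1 k) := by
        rw [image_topRank hv]; congr 1; ext r; simp only [mem_filter, mem_Icc]; omega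
    _ = k := by simp

lemma topRank_comp_equiv {ι' : Type*} [Fintype ι'] (v : ι → β) (e : ι' ≃ ι) (i : ι') :
    topRank (v ∘ e) i = topRank v (e i) :=
  card_equiv e (by simp)

lemma topRank_orbit_translate {G α : Type*} [Group G] [Fintype G] (f : G →* Function.End α)
    (T : α → β) (g : G) (x : α) :
    topRank (fun h => T (f h (f g x))) 1 = topRank (fun h => T (f h x)) g := by
  have : (fun h => T (f h (f g x))) = (fun h => T (f h x)) ∘ Equiv.mulRight g := by
    ext h; exact congrArg T (congrFun (map_mul f h g) x).symm
  rw [this, topRank_comp_equiv, Equiv.coe_mulRight]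
  simp only [one_mul]

lemma Measurable.topRank {α : Type*} [MeasurableSpace α] [TopologicalSpace β]
    [OrderClosedTopology β] [SecondCountableTopology β] [MeasurableSpace β]
    [OpensMeasurableSpace β]
    {F : ι → α → β} (hF : ∀ i, Measurable (F i)) (i : ι) :
    Measurable fun x => topRank (fun j => F j x) i := by
  simp only [_root_.topRank, card_filter]
  exact Finset.measurable_sum _ fun j _ =>
    Measurable.ite (measurableSet_le (hF i) (hF j)) measurable_const measurable_const

end TopRank

namespace MeasureTheory

open Classical in
lemma measure_eq_div_card_of_card_mem_ae_eq {Ω ι : Type*} [MeasurableSpace Ω] {μ : Measure Ω}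
    [IsProbabilityMeasure μ] [Fintype ι] {A : ι → Set Ω} (hA : ∀ i, MeasurableSet (A i))
    {i₀ : ι} (heq : ∀ i, μ (A i) = μ (A i₀)) {k : ℕ}
    (hcount : ∀ᵐ ω ∂μ, #{i | ω ∈ A i} = k) :
    μ (A i₀) = k / Fintype.card ι := by
  have hsum : ∑ i, μ (A i) = k := calc
    ∑ i, μ (A i) = ∫⁻ ω, ∑ i, (A i).indicator (fun _ => (1 : ENNReal)) ω ∂μ := by
      rw [lintegral_finsetSum _ fun i _ => measurable_const.indicator (hA i)]
      exact sum_congr rfl fun i _ => (lintegral_indicator_one (hA i)).symm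
    _ = ∫⁻ _, (k : ENNReal) ∂μ := lintegral_congr_ae <| hcount.mono fun ω hω => by
      simp only [← hω, card_filter, Set.indicator_apply]; push_cast; rfl
    _ = k := by simp
  rw [Finset.sum_congr rfl fun i _ => heq i, sum_const, card_univ, nsmul_eq_mul] at hsum
  have : Nonempty ι := ⟨i₀⟩
  exact (ENNReal.eq_div_iff (by simp) (by simp)).2 hsum

end MeasureTheory

theorem group_invariance_test_exact_size_general
    {Ω : Type*} [MeasurableSpace Ω] (P : Measure Ω) [IsProbabilityMeasure P]
    {n : ℕ} {G : Type*} [Group G] [Fintype G] (m : ℕ) (hm : Fintype.card G = m)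
    (f : G →* Function.End (Fin n → ℝ))
    (hmeas : ∀ g : G, Measurable (f g))
    (X : Ω → (Fin n → ℝ)) (hX : Measurable X)
    (T : (Fin n → ℝ) → ℝ) (hT : Measurable T)
    (hinv : ∀ g : G, Measure.map (fun ω => f g (X ω)) P = Measure.map X P)
    (hdistinct : ∀ᵐ ω ∂P, Function.Injective (fun g : G => T (f g (X ω))))
    (α : ℝ) (hα1 : α < 1) :
    P {ω | (Finset.univ.filter (fun g : G => T (X ω) ≤ T (f g (X ω)))).card ≤ ⌊α * m⌋₊} =
      (⌊α * m⌋₊ : ENNReal) / (m : ENNReal) := by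
  classical
  set k := ⌊α * m⌋₊
  have hkm : k ≤ Fintype.card G :=
    hm ▸ Nat.floor_le_of_le (mul_le_of_le_one_left m.cast_nonneg hα1.le)
  set S := {x | topRank (fun h => T (f h x)) 1 ≤ k}
  have hS : MeasurableSet S :=
    measurableSet_le (Measurable.topRank (fun h => hT.comp (hmeas h)) 1) measurable_const
  have hA (g : G) :
      {ω | topRank (fun h => T (f h (X ω))) g ≤ k} = (fun ω => f g (X ω)) ⁻¹' S := by
    ext ω; simp [S, topRank_orbit_translate]
  have hPA (g : G) : P {ω | topRank (fun h => T (f h (X ω))) g ≤ k} = P (X ⁻¹' S) := by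
    rw [hA, ← Measure.map_apply (f := fun ω => f g (X ω)) ((hmeas g).comp hX) hS, hinv,
      Measure.map_apply hX hS]
  have key := measure_eq_div_card_of_card_mem_ae_eq (i₀ := 1)
    (fun g => hA g ▸ (hmeas g).comp hX hS) (fun g => (hPA g).trans (hPA 1).symm)
    (hdistinct.mono fun ω hω => by simpa using card_topRank_le hω hkm)
  rw [hm] at key
  have hf1 (x : Fin n → ℝ) : f 1 x = x := congrFun (map_one f) x
  simpa only [topRank, hf1] using key

/-- If `X` is `G`-invariant in distribution, `|G| = m`, and the reference values
`T(g X)`, `g ∈ G`, are almost surely pairwise distinct, then the probability that the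
rank (from the top) of `T(X)` among `{T(g X) : g ∈ G}` is at most `⌊α m⌋` is
exactly `⌊α m⌋ / m`. -/
theorem group_invariance_test_exact_size
    {Ω : Type*} [MeasurableSpace Ω] (P : Measure Ω) [IsProbabilityMeasure P]
    {n : ℕ} {G : Type*} [Group G] [Fintype G] (m : ℕ) (hm : Fintype.card G = m)
    (f : G →* Function.End (Fin n → ℝ))
    (hmeas : ∀ g : G, Measurable (f g))
    (X : Ω → (Fin n → ℝ)) (hX : Measurable X)
    (T : (Fin n → ℝ) → ℝ) (hT : Measurable T)
    (hinv : ∀ g : G, Measure.map (fun ω => f g (X ω)) P = Measure.map X P)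
    (hdistinct : ∀ᵐ ω ∂P, Function.Injective (fun g : G => T (f g (X ω))))
    (α : ℝ) (hα0 : 0 < α) (hα1 : α < 1) :
    P {ω | (Finset.univ.filter (fun g : G => T (X ω) ≤ T (f g (X ω)))).card ≤ ⌊α * m⌋₊} =
      (⌊α * m⌋₊ : ENNReal) / (m : ENNReal) :=
  group_invariance_test_exact_size_general P m hm f hmeas X hX T hT hinv hdistinct α hα1
end

section
/- If 𝒮 is a finite subgroup of the orthogonal group O(n) and ι a unit vector such that ι'Sι ≤ 0 for all S ∈ 𝒮 \ {I} (a 'non-positive subgroup'), then |𝒮| ≤ 2n. -/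
/-!
Among vectors with pairwise non-positive inner products, those lying strictly on one side of a
hyperplane are linearly independent. Choosing the hyperplane through none of the vectors splits
any such family of nonzero vectors in `ℝⁿ` into two linearly independent halves, so it has at most
`2n` members. For a subgroup `𝒮` of `O(n)` the orbit `S ↦ Sι` is such a family, because
`⟪Sι, Tι⟫ = ⟪ι, S⁻¹Tι⟫`.
-/

open Matrix Module

section InnerProductSpace

variable {E : Type*} [NormedAddCommGroup E] [InnerProductSpace ℝ E]

theorem linearIndependent_of_pairwise_inner_nonpos {ι : Type*} {v : ι → E} (w : E)
    (hw : ∀ i, 0 < inner ℝ w (v i)) (hv : Pairwise fun i j ↦ inner ℝ (v i) (v j) ≤ 0) :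
    LinearIndependent ℝ v :=
  LinearMap.BilinForm.linearIndependent_of_pairwise_le_zero (innerₗ E)
    (fun _ hx ↦ real_inner_self_pos.mpr hx) (innerₗ E w) v hw hv

theorem exists_forall_inner_ne_zero {ι : Type*} [Finite ι] {v : ι → E} (hv : ∀ i, v i ≠ 0) :
    ∃ w : E, ∀ i, inner ℝ w (v i) ≠ 0 := by
  by_contra! h
  have hcover : ⋃ i, ((ℝ ∙ v i)ᗮ : Set E) = Set.univ :=
    Set.eq_univ_of_forall fun w ↦ by
      obtain ⟨i, hi⟩ := h w
      exact Set.mem_iUnion.mpr ⟨i, Submodule.mem_orthogonal_singleton_iff_inner_left.mpr hi⟩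
  obtain ⟨i, hi⟩ := Subspace.exists_eq_top_of_iUnion_eq_univ hcover
  exact hv i (by simpa using hi)

theorem card_le_two_mul_finrank_of_pairwise_inner_nonpos [FiniteDimensional ℝ E]
    {ι : Type*} [Finite ι] {v : ι → E} (h0 : ∀ i, v i ≠ 0)
    (hv : Pairwise fun i j ↦ inner ℝ (v i) (v j) ≤ 0) :
    Nat.card ι ≤ 2 * finrank ℝ E := by
  obtain ⟨w, hw⟩ := exists_forall_inner_ne_zero h0
  have card_le (w : E) (P : ι → Prop) (hP : ∀ i, P i → 0 < inner ℝ w (v i)) :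
      Nat.card {i // P i} ≤ finrank ℝ E := by
    have : Fintype {i // P i} := Fintype.ofFinite _
    rw [Nat.card_eq_fintype_card]
    exact (linearIndependent_of_pairwise_inner_nonpos (v := fun i : {i // P i} ↦ v i) w
      (fun i ↦ hP i i.2) fun i j hij ↦ hv (Subtype.coe_ne_coe.mpr hij)).fintype_card_le_finrank
  have hpos := card_le w (fun i ↦ 0 < inner ℝ w (v i)) fun _ ↦ id
  have hneg := card_le (-w) (fun i ↦ ¬0 < inner ℝ w (v i)) fun i hi ↦ by
    rw [inner_neg_left, neg_pos]
    exact lt_of_le_of_ne (not_lt.mp hi) (hw i)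
  rw [← Nat.card_congr (Equiv.sumCompl fun i ↦ 0 < inner ℝ w (v i)), Nat.card_sum]
  omega

end InnerProductSpace

theorem Matrix.orthogonalGroup.inner_toLp_mulVec_toLp_mulVec {m : Type*} [Fintype m]
    [DecidableEq m] (S T : orthogonalGroup m ℝ) (x : m → ℝ) :
    inner ℝ (WithLp.toLp 2 (S.1 *ᵥ x)) (WithLp.toLp 2 (T.1 *ᵥ x)) = x ⬝ᵥ (S⁻¹ * T).1 *ᵥ x := by
  rw [EuclideanSpace.inner_toLp_toLp, star_trivial, dotProduct_comm, UnitaryGroup.mul_val,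
    UnitaryGroup.inv_val, ← mulVec_mulVec, dotProduct_mulVec x, star_eq_conjTranspose,
    conjTranspose_eq_transpose_of_trivial, vecMul_transpose]

/-- A 'non-positive' finite subgroup `𝒮` of the orthogonal group, i.e. one with
`ι'Sι ≤ 0` for all non-identity `S ∈ 𝒮` and `ι` a unit vector, has at most `2n` elements. -/
theorem nonpositive_subgroup_card_le
    {n : ℕ}
    (𝒮 : Subgroup (Matrix.orthogonalGroup (Fin n) ℝ)) [Finite 𝒮]
    (ι : Fin n → ℝ) (hι : ι ⬝ᵥ ι = 1)
    (hnonpos : ∀ S ∈ 𝒮, S ≠ 1 → ι ⬝ᵥ (S : Matrix (Fin n) (Fin n) ℝ).mulVec ι ≤ 0) :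
    Nat.card 𝒮 ≤ 2 * n := by
  let orbit (S : 𝒮) : EuclideanSpace ℝ (Fin n) :=
    WithLp.toLp 2 ((S : orthogonalGroup (Fin n) ℝ).1 *ᵥ ι)
  have inner_orbit (S T : 𝒮) :
      inner ℝ (orbit S) (orbit T) = ι ⬝ᵥ ((S⁻¹ * T : 𝒮) : orthogonalGroup (Fin n) ℝ).1 *ᵥ ι :=
    orthogonalGroup.inner_toLp_mulVec_toLp_mulVec _ _ ι
  have orbit_ne_zero (S : 𝒮) : orbit S ≠ 0 := fun h ↦ by
    simpa [h, hι] using inner_orbit S S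
  have orbit_pairwise : Pairwise fun S T ↦ inner ℝ (orbit S) (orbit T) ≤ 0 := fun S T hST ↦
    (inner_orbit S T).trans_le <| hnonpos _ (S⁻¹ * T).2 <| by
      rwa [Ne, OneMemClass.coe_eq_one, inv_mul_eq_one]
  simpa only [finrank_euclideanSpace_fin] using
    card_le_two_mul_finrank_of_pairwise_inner_nonpos orbit_ne_zero orbit_pairwise
end

section
/- Any set of unit vectors in R^n with pairwise non-positive inner products has cardinality at most 2n. -/
/-!
Induction on the dimension. Fix `v ∈ s` and project the remaining vectors onto `vᗮ`. They all
satisfy `⟪v, x⟫ ≤ 0`, so projecting only lowers their pairwise inner products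
(`⟪Px, Py⟫ = ⟪x, y⟫ - ⟪v, x⟫⟪v, y⟫ / ‖v‖²`). The vectors off the line `ℝ ∙ v` therefore project to
nonzero, pairwise obtuse vectors, which are distinct because `⟪Px, Px⟫ > 0`. On the line, besides
`v` there is room for only one vector, a negative multiple of `v`. Hence `#s ≤ 2 + 2 (n - 1)`.
-/

open Module RealInnerProductSpace
open scoped Classical

section

variable {E : Type*} [NormedAddCommGroup E] [InnerProductSpace ℝ E]

lemma inner_orthogonalProjectionOnto_orthogonal_span_singleton (v x y : E) :
    ⟪((ℝ ∙ v)ᗮ.orthogonalProjectionOnto x : E), (ℝ ∙ v)ᗮ.orthogonalProjectionOnto y⟫ =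
      ⟪x, y⟫ - ⟪v, x⟫ * ⟪v, y⟫ / ‖v‖ ^ 2 := by
  rcases eq_or_ne v 0 with rfl | hv
  · simp [Submodule.starProjection_top]
  simp only [Submodule.orthogonalProjectionOnto_orthogonal, Submodule.starProjection_singleton,
    inner_sub_left, inner_sub_right, real_inner_smul_left, real_inner_smul_right,
    real_inner_self_eq_norm_sq, real_inner_comm x v, RCLike.ofReal_real_eq_id, id]
  field_simp
  ring

lemma inner_orthogonalProjectionOnto_orthogonal_span_singleton_le {v x y : E}
    (hx : ⟪v, x⟫ ≤ 0) (hy : ⟪v, y⟫ ≤ 0) :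
    ⟪((ℝ ∙ v)ᗮ.orthogonalProjectionOnto x : E), (ℝ ∙ v)ᗮ.orthogonalProjectionOnto y⟫ ≤
      ⟪x, y⟫ := by
  rw [inner_orthogonalProjectionOnto_orthogonal_span_singleton, sub_le_self_iff]
  exact div_nonneg (mul_nonneg_of_nonpos_of_nonpos hx hy) (by positivity)

lemma orthogonalProjectionOnto_orthogonal_span_singleton_eq_zero_iff {v x : E} :
    (ℝ ∙ v)ᗮ.orthogonalProjectionOnto x = 0 ↔ x ∈ ℝ ∙ v := by
  rw [Submodule.orthogonalProjectionOnto_eq_zero_iff, Submodule.orthogonal_orthogonal]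

lemma inner_pos_of_mem_span_singleton {v a b : E} (ha : a ∈ ℝ ∙ v) (hb : b ∈ ℝ ∙ v)
    (ha0 : a ≠ 0) (hb0 : b ≠ 0) (hva : ⟪v, a⟫ ≤ 0) (hvb : ⟪v, b⟫ ≤ 0) :
    0 < ⟪a, b⟫ := by
  obtain ⟨c, rfl⟩ := Submodule.mem_span_singleton.mp ha
  obtain ⟨d, rfl⟩ := Submodule.mem_span_singleton.mp hb
  have hc : c ≠ 0 := left_ne_zero_of_smul ha0
  have hd : d ≠ 0 := left_ne_zero_of_smul hb0
  have hv : 0 < ‖v‖ ^ 2 := by have := right_ne_zero_of_smul ha0; positivity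
  simp only [real_inner_smul_left, real_inner_smul_right, real_inner_self_eq_norm_sq] at hva hvb ⊢
  have hc' : c < 0 := lt_of_le_of_ne (nonpos_of_mul_nonpos_left hva hv) hc
  have hd' : d < 0 := lt_of_le_of_ne (nonpos_of_mul_nonpos_left hvb hv) hd
  rw [← mul_assoc]
  exact mul_pos (mul_pos_of_neg_of_neg hd' hc') hv

variable {v : E} {t : Finset E}

lemma card_filter_mem_span_singleton_le_one (h0 : 0 ∉ t)
    (ht : (t : Set E).Pairwise (⟪·, ·⟫ ≤ 0)) (hvt : ∀ x ∈ t, ⟪v, x⟫ ≤ 0) :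
    (t.filter (· ∈ ℝ ∙ v)).card ≤ 1 := by
  refine Finset.card_le_one.mpr fun a ha b hb => by_contra fun hab => ?_
  rw [Finset.mem_filter] at ha hb
  exact (ht ha.1 hb.1 hab).not_gt <| inner_pos_of_mem_span_singleton ha.2 hb.2
    (ne_of_mem_of_not_mem ha.1 h0) (ne_of_mem_of_not_mem hb.1 h0) (hvt a ha.1) (hvt b hb.1)

lemma pairwise_inner_nonpos_image_orthogonalProjectionOnto
    (ht : (t : Set E).Pairwise (⟪·, ·⟫ ≤ 0)) (hvt : ∀ x ∈ t, ⟪v, x⟫ ≤ 0) :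
    (t.image (ℝ ∙ v)ᗮ.orthogonalProjectionOnto : Set (ℝ ∙ v)ᗮ).Pairwise (⟪·, ·⟫ ≤ 0) := by
  rintro _ hPx _ hPy hPxy
  obtain ⟨x, hx, rfl⟩ := Finset.mem_image.mp hPx
  obtain ⟨y, hy, rfl⟩ := Finset.mem_image.mp hPy
  exact (inner_orthogonalProjectionOnto_orthogonal_span_singleton_le (hvt x hx) (hvt y hy)).trans
    (ht hx hy fun hxy => hPxy (hxy ▸ rfl))

lemma injOn_orthogonalProjectionOnto_filter_notMem_span_singleton
    (ht : (t : Set E).Pairwise (⟪·, ·⟫ ≤ 0)) (hvt : ∀ x ∈ t, ⟪v, x⟫ ≤ 0) :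
    Set.InjOn (ℝ ∙ v)ᗮ.orthogonalProjectionOnto (t.filter (· ∉ ℝ ∙ v)) := by
  intro x hx y hy hPxy
  rw [Finset.coe_filter] at hx hy
  by_contra hxy
  have hPx := (inner_orthogonalProjectionOnto_orthogonal_span_singleton_le (hvt x hx.1)
    (hvt y hy.1)).trans (ht hx.1 hy.1 hxy)
  rw [← hPxy, real_inner_self_nonpos, ZeroMemClass.coe_eq_zero,
    orthogonalProjectionOnto_orthogonal_span_singleton_eq_zero_iff] at hPx
  exact hx.2 hPx

end

theorem card_le_two_mul_finrank_of_pairwise_inner_nonpos_s5 {E : Type*} [NormedAddCommGroup E]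
    [InnerProductSpace ℝ E] [FiniteDimensional ℝ E] {s : Finset E}
    (h0 : 0 ∉ s) (hs : (s : Set E).Pairwise (⟪·, ·⟫ ≤ 0)) : s.card ≤ 2 * finrank ℝ E := by
  rcases s.eq_empty_or_nonempty with rfl | ⟨v, hv⟩
  · simp
  set t := s.erase v
  have h0t : 0 ∉ t := fun h => h0 (Finset.mem_of_mem_erase h)
  have ht : (t : Set E).Pairwise (⟪·, ·⟫ ≤ 0) := hs.mono (Finset.erase_subset v s)
  have hvt : ∀ x ∈ t, ⟪v, x⟫ ≤ 0 := fun x hx =>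
    hs hv (Finset.mem_of_mem_erase hx) (Finset.ne_of_mem_erase hx).symm
  set off := t.filter (· ∉ ℝ ∙ v)
  have hsplit : (t.filter (· ∈ ℝ ∙ v)).card + off.card + 1 = s.card := by
    rw [Finset.card_filter_add_card_filter_not, Finset.card_erase_add_one hv]
  have hdim : finrank ℝ (ℝ ∙ v)ᗮ + 1 = finrank ℝ E := by
    rw [← Submodule.finrank_add_finrank_orthogonal (ℝ ∙ v),
      finrank_span_singleton (ne_of_mem_of_not_mem hv h0), add_comm]
  have hoff : off.card ≤ 2 * finrank ℝ (ℝ ∙ v)ᗮ := by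
    rw [← Finset.card_image_of_injOn
      (injOn_orthogonalProjectionOnto_filter_notMem_span_singleton ht hvt)]
    refine card_le_two_mul_finrank_of_pairwise_inner_nonpos_s5 ?_ <|
      pairwise_inner_nonpos_image_orthogonalProjectionOnto (ht.mono (Finset.filter_subset _ t))
        fun x hx => hvt x (Finset.mem_filter.mp hx).1
    simp
  have hon := card_filter_mem_span_singleton_le_one h0t ht hvt
  omega
termination_by finrank ℝ E
decreasing_by omega

/-- Any set of unit vectors in `ℝⁿ` with pairwise non-positive inner products has
cardinality at most `2n`. -/
theorem unit_vectors_nonpos_inner_card_le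
    {n : ℕ} (s : Finset (EuclideanSpace ℝ (Fin n)))
    (hunit : ∀ v ∈ s, ‖v‖ = 1)
    (hnonpos : ∀ v ∈ s, ∀ w ∈ s, v ≠ w → inner ℝ v w ≤ (0 : ℝ)) :
    s.card ≤ 2 * n := by
  have h0 : (0 : EuclideanSpace ℝ (Fin n)) ∉ s := fun h => by simpa using hunit 0 h
  simpa using card_le_two_mul_finrank_of_pairwise_inner_nonpos_s5 h0 hnonpos
end
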